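/- arXiv:2603.20959 — 4 statements merged into one kernel-verified Lean document; each statement's English description precedes it below -/
import Mathlib

section
/- Let g, ĝ : ℝ^d → ℝ be measurable, t ∈ ℝ, p a probability density on ℝ^d with P_F := ∫ 𝟙_{{g(x)>t}} p(x) dx, and q̄ a probability density with q̄(x) > 0 whenever p(x) > 0. Let X̃_1, …, X̃_M and X_1, …, X_N be independent samples, each with density q̄. Then the multifidelity estimator (1/M) ∑_{i=1}^M 𝟙_{{ĝ(X̃_i)>t}} p(X̃_i)/q̄(X̃_i) + (1/N) ∑_{i=1}^N ( 𝟙_{{g(X_i)>t}} − 𝟙_{{ĝ(X_i)>t}} ) p(X_i)/q̄(X_i) is unbiased for P_F, i.e., its expectation equals P_F. -/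
open MeasureTheory ProbabilityTheory

lemma mf_key {d : ℕ} (p qbar : (Fin d → ℝ) → ℝ)
    (hp_meas : Measurable p) (hp_nonneg : ∀ x, 0 ≤ p x) (hp_int : Integrable p)
    (hqbar_meas : Measurable qbar) (hqbar_nonneg : ∀ x, 0 ≤ qbar x)
    (hqbar_pos : ∀ x, 0 < p x → 0 < qbar x)
    {Ω : Type*} [MeasureSpace Ω]
    (Y : Ω → (Fin d → ℝ)) (hY : Measurable Y)
    (hlaw : Measure.map Y ℙ = volume.withDensity (fun x => ENNReal.ofReal (qbar x)))
    (S : Set (Fin d → ℝ)) (hS : MeasurableSet S) :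
    Integrable (fun ω => S.indicator (fun _ => (1:ℝ)) (Y ω) * p (Y ω) / qbar (Y ω)) ℙ ∧
    ∫ ω, S.indicator (fun _ => (1:ℝ)) (Y ω) * p (Y ω) / qbar (Y ω) = ∫ x in S, p x := by
  classical
  set F : (Fin d → ℝ) → ℝ := fun x => S.indicator (fun _ => (1:ℝ)) x * p x / qbar x with hF
  have hFmeas : Measurable F := by
    apply Measurable.div
    · exact ((measurable_const.indicator hS).mul hp_meas)
    · exact hqbar_meas
  have hkey : ∀ x, (qbar x).toNNReal • F x = S.indicator p x := by
    intro x
    simp only [NNReal.smul_def, Real.coe_toNNReal _ (hqbar_nonneg x), smul_eq_mul, hF]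
    by_cases hq : qbar x = 0
    · have hp0 : p x = 0 :=
        le_antisymm (not_lt.mp fun h => by simpa [hq] using hqbar_pos x h) (hp_nonneg x)
      simp [hq, hp0, Set.indicator_apply]
    · rw [Set.indicator_apply, Set.indicator_apply]
      split_ifs with h
      · field_simp
      · simp
  have hdens : (volume.withDensity (fun x => ENNReal.ofReal (qbar x)))
      = volume.withDensity (fun x => ((qbar x).toNNReal : ENNReal)) := by
    simp [ENNReal.ofReal]
  have hInt : Integrable F (Measure.map Y ℙ) := by
    rw [hlaw, hdens, integrable_withDensity_iff_integrable_smul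
      (by exact hqbar_meas.real_toNNReal)]
    have : (fun x => (qbar x).toNNReal • F x) = S.indicator p := funext hkey
    rw [this]
    exact hp_int.indicator hS
  constructor
  · exact (integrable_map_measure hFmeas.aestronglyMeasurable hY.aemeasurable).mp hInt
  · rw [← integral_map hY.aemeasurable hFmeas.aestronglyMeasurable, hlaw, hdens,
      integral_withDensity_eq_integral_smul (by exact hqbar_meas.real_toNNReal)]
    simp only [hkey]
    exact integral_indicator hS

/-- The multifidelity estimator
`(1/M) ∑ᵢ 𝟙_{ĝ(X̃ᵢ)>t} p(X̃ᵢ)/q̄(X̃ᵢ)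
  + (1/N) ∑ᵢ (𝟙_{g(Xᵢ)>t} − 𝟙_{ĝ(Xᵢ)>t}) p(Xᵢ)/q̄(Xᵢ)`,
with all samples independent with density `q̄` (positive wherever `p > 0`),
is unbiased for `P_F = ∫ 𝟙_{g(x)>t} p(x) dx`. -/
theorem stmt_3
    {d : ℕ} (g ghat : (Fin d → ℝ) → ℝ)
    (hg_meas : Measurable g) (hghat_meas : Measurable ghat) (t : ℝ)
    (p : (Fin d → ℝ) → ℝ)
    (hp_meas : Measurable p) (hp_nonneg : ∀ x, 0 ≤ p x) (hp_int : ∫ x, p x = 1)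
    (qbar : (Fin d → ℝ) → ℝ)
    (hqbar_meas : Measurable qbar) (hqbar_nonneg : ∀ x, 0 ≤ qbar x)
    (hqbar_int : ∫ x, qbar x = 1)
    (hqbar_pos : ∀ x, 0 < p x → 0 < qbar x)
    {Ω : Type*} [MeasureSpace Ω] [IsProbabilityMeasure (ℙ : Measure Ω)]
    (M N : ℕ) (hM : 1 ≤ M) (hN : 1 ≤ N)
    (X : (Fin M ⊕ Fin N) → Ω → (Fin d → ℝ)) (hX_meas : ∀ i, Measurable (X i))
    (hX_indep : iIndepFun X ℙ)
    (hX_law : ∀ i, Measure.map (X i) ℙ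
      = volume.withDensity (fun x => ENNReal.ofReal (qbar x))) :
    ∫ ω,
        ((1 / (M : ℝ)) * ∑ i : Fin M,
          {x | ghat x > t}.indicator (fun _ => (1 : ℝ)) (X (.inl i) ω)
            * p (X (.inl i) ω) / qbar (X (.inl i) ω)
        + (1 / (N : ℝ)) * ∑ i : Fin N,
          ({x | g x > t}.indicator (fun _ => (1 : ℝ)) (X (.inr i) ω)
            - {x | ghat x > t}.indicator (fun _ => (1 : ℝ)) (X (.inr i) ω))
            * p (X (.inr i) ω) / qbar (X (.inr i) ω)) ∂(ℙ : Measure Ω)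
      = ∫ x in {x | g x > t}, p x := by
  classical
  have hp_integrable : Integrable p := by
    by_contra h
    rw [integral_undef h] at hp_int
    norm_num at hp_int
  set A : Set (Fin d → ℝ) := {x | ghat x > t} with hA_def
  set B : Set (Fin d → ℝ) := {x | g x > t} with hB_def
  have hA : MeasurableSet A := measurableSet_lt measurable_const hghat_meas
  have hB : MeasurableSet B := measurableSet_lt measurable_const hg_meas
  have key : ∀ (i : Fin M ⊕ Fin N) (S : Set (Fin d → ℝ)), MeasurableSet S →
      Integrable (fun ω => S.indicator (fun _ => (1:ℝ)) (X i ω) * p (X i ω) / qbar (X i ω)) ℙ ∧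
      ∫ ω, S.indicator (fun _ => (1:ℝ)) (X i ω) * p (X i ω) / qbar (X i ω) = ∫ x in S, p x :=
    fun i S hS => mf_key p qbar hp_meas hp_nonneg hp_integrable hqbar_meas hqbar_nonneg
      hqbar_pos (X i) (hX_meas i) (hX_law i) S hS
  simp only [sub_mul, sub_div]
  have I1 : Integrable (fun ω => (1 / (M : ℝ)) * ∑ i : Fin M,
      A.indicator (fun _ => (1:ℝ)) (X (.inl i) ω) * p (X (.inl i) ω) / qbar (X (.inl i) ω)) ℙ :=
    (integrable_finset_sum _ fun i _ => (key (.inl i) A hA).1).const_mul _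
  have I2 : Integrable (fun ω => (1 / (N : ℝ)) * ∑ i : Fin N,
      (B.indicator (fun _ => (1:ℝ)) (X (.inr i) ω) * p (X (.inr i) ω) / qbar (X (.inr i) ω)
       - A.indicator (fun _ => (1:ℝ)) (X (.inr i) ω) * p (X (.inr i) ω) / qbar (X (.inr i) ω))) ℙ :=
    (integrable_finset_sum _ fun i _ => ((key (.inr i) B hB).1.sub (key (.inr i) A hA).1)).const_mul _
  have ID : ∀ i : Fin N, Integrable (fun ω =>
      B.indicator (fun _ => (1:ℝ)) (X (.inr i) ω) * p (X (.inr i) ω) / qbar (X (.inr i) ω)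
       - A.indicator (fun _ => (1:ℝ)) (X (.inr i) ω) * p (X (.inr i) ω) / qbar (X (.inr i) ω)) ℙ :=
    fun i => (key (.inr i) B hB).1.sub (key (.inr i) A hA).1
  rw [integral_add I1 I2, integral_const_mul, integral_const_mul,
    integral_finset_sum _ (fun i _ => (key (.inl i) A hA).1),
    integral_finset_sum _ (fun i _ => ID i)]
  have sA : ∀ i : Fin M, (∫ ω, A.indicator (fun _ => (1:ℝ)) (X (.inl i) ω)
      * p (X (.inl i) ω) / qbar (X (.inl i) ω)) = ∫ x in A, p x :=
    fun i => (key (.inl i) A hA).2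
  have sD : ∀ i : Fin N, (∫ ω,
      (B.indicator (fun _ => (1:ℝ)) (X (.inr i) ω) * p (X (.inr i) ω) / qbar (X (.inr i) ω)
       - A.indicator (fun _ => (1:ℝ)) (X (.inr i) ω) * p (X (.inr i) ω) / qbar (X (.inr i) ω)))
      = (∫ x in B, p x) - ∫ x in A, p x := fun i => by
    rw [integral_sub (key (.inr i) B hB).1 (key (.inr i) A hA).1,
      (key (.inr i) B hB).2, (key (.inr i) A hA).2]
  simp only [sA, sD, Finset.sum_const, Finset.card_univ, Fintype.card_fin, nsmul_eq_mul]
  have hM' : (M : ℝ) ≠ 0 := Nat.cast_ne_zero.mpr (by omega)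
  have hN' : (N : ℝ) ≠ 0 := Nat.cast_ne_zero.mpr (by omega)
  field_simp
  ring
end

section
/- Let F ⊆ ℝ^d be measurable, p a probability density on ℝ^d, π : ℝ^d → [0,1] measurable, and α ∈ (0,1]. Set r = ∫ |π(x) − 𝟙_F(x)| p(x) dx. Then ∫ |π(x)^α − 𝟙_F(x)| p(x) dx ≤ r^α; equivalently, the total variation distance between the unnormalized measures π^α p dx and 𝟙_F p dx satisfies (1/2) ∫ |π(x)^α − 𝟙_F(x)| p(x) dx ≤ (1/2) r^α. -/
open MeasureTheory
open scoped NNReal ENNReal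

/-- Pointwise key inequality: for `t ∈ [0,1]` and `α ∈ (0,1]`,
`|t^α - b| ≤ |t - b|^α` for `b ∈ {0,1}` (indicator values). -/
lemma aux_pow_ind (t : ℝ) (ht0 : 0 ≤ t) (ht1 : t ≤ 1) (α : ℝ) (hα : 0 < α) (hα1 : α ≤ 1) :
    (|t ^ α - 1| ≤ |t - 1| ^ α) ∧ (|t ^ α - 0| ≤ |t - 0| ^ α) := by
  have hself : ∀ s : ℝ, 0 ≤ s → s ≤ 1 → s ≤ s ^ α := by
    intro s hs0 hs1
    rcases eq_or_lt_of_le hs0 with h | h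
    · simp [← h, Real.zero_rpow hα.ne']
    · calc s = s ^ (1 : ℝ) := (Real.rpow_one s).symm
        _ ≤ s ^ α := Real.rpow_le_rpow_of_exponent_ge h hs1 hα1
  have htα0 : 0 ≤ t ^ α := Real.rpow_nonneg ht0 α
  have htα1 : t ^ α ≤ 1 := Real.rpow_le_one ht0 ht1 hα.le
  constructor
  · have h1 : |t ^ α - 1| = 1 - t ^ α := by rw [abs_sub_comm]; exact abs_of_nonneg (by linarith)
    have h2 : |t - 1| = 1 - t := by rw [abs_sub_comm]; exact abs_of_nonneg (by linarith)
    rw [h1, h2]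
    have := hself (1 - t) (by linarith) (by linarith)
    have := hself t ht0 ht1
    linarith
  · rw [sub_zero, sub_zero, abs_of_nonneg htα0, abs_of_nonneg ht0]

/-- For a measurable `F ⊆ ℝ^d`, a probability density `p`, a
measurable `π : ℝ^d → [0,1]`, and `α ∈ (0,1]`, with `r = ∫ |π − 𝟙_F| p`, one has
`∫ |π^α − 𝟙_F| p ≤ r^α`; equivalently, the total variation distance between the
unnormalized measures `π^α p dx` and `𝟙_F p dx` is at most `(1/2) r^α`. -/
theorem stmt_8
    {d : ℕ} (F : Set (Fin d → ℝ)) (hF : MeasurableSet F)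
    (p : (Fin d → ℝ) → ℝ)
    (hp_meas : Measurable p) (hp_nonneg : ∀ x, 0 ≤ p x) (hp_int : ∫ x, p x = 1)
    (π : (Fin d → ℝ) → ℝ) (hπ_meas : Measurable π)
    (hπ01 : ∀ x, π x ∈ Set.Icc (0 : ℝ) 1)
    (α : ℝ) (hα : 0 < α) (hα1 : α ≤ 1)
    (r : ℝ) (hr : r = ∫ x, |π x - F.indicator (fun _ => (1 : ℝ)) x| * p x) :
    (∫ x, |π x ^ α - F.indicator (fun _ => (1 : ℝ)) x| * p x ≤ r ^ α) ∧
    ((1 / 2) * ∫ x, |π x ^ α - F.indicator (fun _ => (1 : ℝ)) x| * p x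
      ≤ (1 / 2) * r ^ α) := by
  -- it suffices to prove the first inequality
  suffices h : ∫ x, |π x ^ α - F.indicator (fun _ => (1 : ℝ)) x| * p x ≤ r ^ α by
    exact ⟨h, by linarith⟩
  set ind : (Fin d → ℝ) → ℝ := F.indicator (fun _ => (1 : ℝ)) with hind
  have hind_meas : Measurable ind := measurable_const.indicator hF
  have hind_mem : ∀ x, ind x = 0 ∨ ind x = 1 := by
    intro x
    by_cases hx : x ∈ F
    · right; simp [hind, Set.indicator_of_mem hx]
    · left; simp [hind, Set.indicator_of_notMem hx]
  -- the density measure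
  set pnn : (Fin d → ℝ) → ℝ≥0 := fun x => ⟨p x, hp_nonneg x⟩ with hpnn
  have hpnn_meas : Measurable pnn := by
    rw [hpnn]; exact hp_meas.subtype_mk
  set μ : Measure (Fin d → ℝ) := volume.withDensity (fun x => (pnn x : ℝ≥0∞)) with hμ
  have hp_integrable : Integrable p := by
    by_contra hcon
    rw [integral_undef hcon] at hp_int
    norm_num at hp_int
  have hkey : ∀ g : (Fin d → ℝ) → ℝ, ∫ x, g x * p x = ∫ x, g x ∂μ := by
    intro g
    rw [hμ, integral_withDensity_eq_integral_smul hpnn_meas g]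
    congr 1 with x
    simp [hpnn, NNReal.smul_def, mul_comm]; rfl
  have hμ_prob : IsProbabilityMeasure μ := by
    constructor
    rw [hμ, withDensity_apply _ MeasurableSet.univ, Measure.restrict_univ]
    have hcoe : ∀ x, ((pnn x : ℝ≥0) : ℝ≥0∞) = ENNReal.ofReal (p x) := by
      intro x
      rw [ENNReal.ofReal]
      congr 1
      ext
      simp [hpnn, Real.coe_toNNReal _ (hp_nonneg x)]; rfl
    simp_rw [hcoe]
    rw [← ofReal_integral_eq_lintegral_ofReal hp_integrable
      (Filter.Eventually.of_forall hp_nonneg), hp_int, ENNReal.ofReal_one]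
  -- the two integrands
  set g : (Fin d → ℝ) → ℝ := fun x => |π x - ind x| with hg
  set h : (Fin d → ℝ) → ℝ := fun x => |π x ^ α - ind x| with hh
  have hg_meas : Measurable g := (hπ_meas.sub hind_meas).abs
  have hrpow_cont : Continuous (fun s : ℝ => s ^ α) := Real.continuous_rpow_const hα.le
  have hh_meas : Measurable h :=
    ((hrpow_cont.measurable.comp hπ_meas).sub hind_meas).abs
  have hg01 : ∀ x, g x ∈ Set.Icc (0 : ℝ) 1 := by
    intro x
    obtain ⟨h0, h1⟩ := hπ01 x
    refine ⟨abs_nonneg _, ?_⟩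
    show |π x - ind x| ≤ 1
    rcases hind_mem x with hx | hx <;> rw [hx, abs_le] <;> constructor <;> linarith
  have hh_le : ∀ x, h x ≤ g x ^ α := by
    intro x
    obtain ⟨h0, h1⟩ := hπ01 x
    obtain ⟨hk1, hk0⟩ := aux_pow_ind (π x) h0 h1 α hα hα1
    rcases hind_mem x with hx | hx
    · simpa [hh, hg, hx] using hk0
    · simpa [hh, hg, hx] using hk1
  -- integrability
  have hbdd : ∀ (f : (Fin d → ℝ) → ℝ), Measurable f → (∀ x, f x ∈ Set.Icc (0:ℝ) 1) →
      Integrable f μ := by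
    intro f hf hf01
    apply Integrable.mono' (integrable_const (1 : ℝ)) hf.aestronglyMeasurable
    filter_upwards with x
    rw [Real.norm_eq_abs, abs_of_nonneg (hf01 x).1]
    exact (hf01 x).2
  have hg_int : Integrable g μ := hbdd g hg_meas hg01
  have hh_int : Integrable h μ := hbdd h hh_meas (fun x => by
    obtain ⟨h0, h1⟩ := hπ01 x
    have hα0 : 0 ≤ π x ^ α := Real.rpow_nonneg h0 α
    have hα1' : π x ^ α ≤ 1 := Real.rpow_le_one h0 h1 hα.le
    refine ⟨abs_nonneg _, ?_⟩
    show |π x ^ α - ind x| ≤ 1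
    rcases hind_mem x with hx | hx <;> rw [hx, abs_le] <;> constructor <;> linarith)
  have hgα_int : Integrable (fun x => g x ^ α) μ := hbdd _
    (hrpow_cont.measurable.comp hg_meas)
    (fun x => ⟨Real.rpow_nonneg (hg01 x).1 α, Real.rpow_le_one (hg01 x).1 (hg01 x).2 hα.le⟩)
  -- rewrite the goal integrals as integrals over μ
  rw [hr, hkey, hkey]
  -- Jensen's inequality
  have hjensen : ∫ x, g x ^ α ∂μ ≤ (∫ x, g x ∂μ) ^ α := by
    have hconc : ConcaveOn ℝ (Set.Ici 0) (fun s : ℝ => s ^ α) :=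
      Real.concaveOn_rpow hα.le hα1
    exact hconc.le_map_integral (hrpow_cont.continuousOn)
      isClosed_Ici (Filter.Eventually.of_forall fun x => (hg01 x).1) hg_int hgα_int
  calc ∫ x, h x ∂μ ≤ ∫ x, g x ^ α ∂μ :=
        integral_mono hh_int hgα_int hh_le
    _ ≤ (∫ x, g x ∂μ) ^ α := hjensen
end

section
/- Let F ⊆ ℝ^d be measurable, p a probability density on ℝ^d, π : ℝ^d → [0,1] measurable, and α ∈ (0,1]. Set Z = ∫ π(x)^α p(x) dx, P_F = ∫_F p(x) dx, and r = ∫ |π(x) − 𝟙_F(x)| p(x) dx. Then |Z − P_F| ≤ r^α. -/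
/-!
Since `1_F` takes only the values `0` and `1`, `1_F = 1_F ^ α`, so `Z - P_F` is the difference
of the `α`-th moments of `π` and `1_F` under the law `p(x) dx`. The map `t ↦ t ^ α` is
`α`-Hölder on `[0, ∞)` by subadditivity of `t ↦ t ^ α`, which bounds that difference by
`∫ |π - 1_F| ^ α p`, and Jensen's inequality for the concave map `t ↦ t ^ α` bounds this by `r ^ α`.
-/

open MeasureTheory Set

theorem Real.abs_rpow_sub_rpow_le {a b α : ℝ} (ha : 0 ≤ a) (hb : 0 ≤ b) (hα0 : 0 ≤ α)
    (hα1 : α ≤ 1) : |a ^ α - b ^ α| ≤ |a - b| ^ α := by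
  wlog hba : b ≤ a generalizing a b
  · rw [abs_sub_comm, abs_sub_comm a]
    exact this hb ha (le_of_not_ge hba)
  have hmono : b ^ α ≤ a ^ α := Real.rpow_le_rpow hb hba hα0
  have hsubadd : (b + (a - b)) ^ α ≤ b ^ α + (a - b) ^ α :=
    Real.rpow_add_le_add_rpow hb (sub_nonneg.2 hba) hα0 hα1
  rw [add_sub_cancel] at hsubadd
  rw [abs_of_nonneg (sub_nonneg.2 hmono), abs_of_nonneg (sub_nonneg.2 hba)]
  linarith

theorem Set.indicator_one_rpow {X : Type*} (F : Set X) (x : X) {α : ℝ} (hα : α ≠ 0) :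
    F.indicator (fun _ => (1 : ℝ)) x ^ α = F.indicator (fun _ => (1 : ℝ)) x := by
  by_cases hx : x ∈ F <;> simp [hx, Real.zero_rpow hα]

section ProbabilitySpace

variable {Ω : Type*} [MeasurableSpace Ω] {μ : Measure Ω} {f g : Ω → ℝ} {α : ℝ}

theorem integrable_rpow_of_mem_Icc [IsFiniteMeasure μ] (hf : AEMeasurable f μ)
    (hf01 : ∀ᵐ x ∂μ, f x ∈ Icc 0 1) (hα0 : 0 ≤ α) : Integrable (fun x => f x ^ α) μ :=
  Integrable.of_mem_Icc 0 1 ((Real.continuous_rpow_const hα0).measurable.comp_aemeasurable hf)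
    (hf01.mono fun _ hx => ⟨Real.rpow_nonneg hx.1 α, Real.rpow_le_one hx.1 hx.2 hα0⟩)

theorem integral_rpow_le_rpow_integral [IsProbabilityMeasure μ] (hf0 : ∀ᵐ x ∂μ, 0 ≤ f x)
    (hfi : Integrable f μ) (hfαi : Integrable (fun x => f x ^ α) μ) (hα0 : 0 ≤ α)
    (hα1 : α ≤ 1) : ∫ x, f x ^ α ∂μ ≤ (∫ x, f x ∂μ) ^ α :=
  (Real.concaveOn_rpow hα0 hα1).le_map_integral (Real.continuous_rpow_const hα0).continuousOn
    isClosed_Ici hf0 hfi hfαi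

theorem abs_integral_rpow_sub_integral_rpow_le [IsProbabilityMeasure μ] (hf : AEMeasurable f μ)
    (hg : AEMeasurable g μ) (hf01 : ∀ᵐ x ∂μ, f x ∈ Icc 0 1) (hg01 : ∀ᵐ x ∂μ, g x ∈ Icc 0 1)
    (hα0 : 0 ≤ α) (hα1 : α ≤ 1) :
    |∫ x, f x ^ α ∂μ - ∫ x, g x ^ α ∂μ| ≤ (∫ x, |f x - g x| ∂μ) ^ α := by
  have hdist01 : ∀ᵐ x ∂μ, |f x - g x| ∈ Icc 0 1 := by
    filter_upwards [hf01, hg01] with x hfx hgx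
    exact ⟨abs_nonneg _, abs_sub_le_iff.2 ⟨by linarith [hfx.2, hgx.1], by linarith [hfx.1, hgx.2]⟩⟩
  have hdist : AEMeasurable (fun x => |f x - g x|) μ := (hf.sub hg).abs
  have hfα := integrable_rpow_of_mem_Icc hf hf01 hα0
  have hgα := integrable_rpow_of_mem_Icc hg hg01 hα0
  calc |∫ x, f x ^ α ∂μ - ∫ x, g x ^ α ∂μ|
      = |∫ x, (f x ^ α - g x ^ α) ∂μ| := by rw [integral_sub hfα hgα]
    _ ≤ ∫ x, |f x ^ α - g x ^ α| ∂μ := abs_integral_le_integral_abs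
    _ ≤ ∫ x, |f x - g x| ^ α ∂μ := by
        refine integral_mono_ae (hfα.sub hgα).abs (integrable_rpow_of_mem_Icc hdist hdist01 hα0) ?_
        filter_upwards [hf01, hg01] with x hfx hgx
        exact Real.abs_rpow_sub_rpow_le hfx.1 hgx.1 hα0 hα1
    _ ≤ (∫ x, |f x - g x| ∂μ) ^ α :=
        integral_rpow_le_rpow_integral (hdist01.mono fun _ hx => hx.1)
          (Integrable.of_mem_Icc 0 1 hdist hdist01) (integrable_rpow_of_mem_Icc hdist hdist01 hα0)
          hα0 hα1

end ProbabilitySpace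

section Density

variable {X : Type*} [MeasurableSpace X] {μ : Measure X} {p : X → ℝ}

theorem integral_withDensity_ofReal_eq_integral_mul (hp : AEMeasurable p μ) (hp0 : ∀ x, 0 ≤ p x)
    (g : X → ℝ) : ∫ x, g x ∂μ.withDensity (fun x => ENNReal.ofReal (p x)) = ∫ x, g x * p x ∂μ := by
  rw [integral_withDensity_eq_integral_toReal_smul₀ hp.ennreal_ofReal
    (ae_of_all _ fun _ => ENNReal.ofReal_lt_top)]
  simp only [ENNReal.toReal_ofReal (hp0 _), smul_eq_mul, mul_comm]

theorem isProbabilityMeasure_withDensity_ofReal (hp0 : ∀ x, 0 ≤ p x) (hp1 : ∫ x, p x ∂μ = 1) :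
    IsProbabilityMeasure (μ.withDensity fun x => ENNReal.ofReal (p x)) := by
  have hpi : Integrable p μ := .of_integral_ne_zero (by rw [hp1]; exact one_ne_zero)
  constructor
  rw [withDensity_apply _ MeasurableSet.univ, setLIntegral_univ,
    ← ofReal_integral_eq_lintegral_ofReal hpi (ae_of_all _ hp0), hp1, ENNReal.ofReal_one]

end Density

theorem stmt_9_general
    {d : ℕ} (F : Set (Fin d → ℝ)) (hF : MeasurableSet F)
    (p : (Fin d → ℝ) → ℝ)
    (hp_nonneg : ∀ x, 0 ≤ p x) (hp_int : ∫ x, p x = 1)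
    (π : (Fin d → ℝ) → ℝ) (hπ_meas : Measurable π)
    (hπ01 : ∀ x, π x ∈ Set.Icc (0 : ℝ) 1)
    (α : ℝ) (hα : 0 < α) (hα1 : α ≤ 1)
    (Z PF r : ℝ)
    (hZ : Z = ∫ x, π x ^ α * p x)
    (hPF : PF = ∫ x in F, p x)
    (hr : r = ∫ x, |π x - F.indicator (fun _ => (1 : ℝ)) x| * p x) :
    |Z - PF| ≤ r ^ α := by
  have hp_aemeas : AEMeasurable p :=
    (Integrable.of_integral_ne_zero (by rw [hp_int]; exact one_ne_zero)).aemeasurable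
  have hind01 : ∀ x, F.indicator (fun _ => (1 : ℝ)) x ∈ Icc 0 1 := fun x => by
    by_cases hx : x ∈ F <;> simp [hx]
  have := isProbabilityMeasure_withDensity_ofReal hp_nonneg hp_int
  have hmain := abs_integral_rpow_sub_integral_rpow_le
    (μ := volume.withDensity fun x => ENNReal.ofReal (p x)) hπ_meas.aemeasurable
    (measurable_const.indicator hF).aemeasurable (ae_of_all _ hπ01) (ae_of_all _ hind01) hα.le hα1
  simp only [integral_withDensity_ofReal_eq_integral_mul hp_aemeas hp_nonneg,
    F.indicator_one_rpow _ hα.ne', ← indicator_mul_left, one_mul] at hmain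
  rwa [hZ, hPF, hr, ← integral_indicator hF]

/-- For a measurable `F ⊆ ℝ^d`, a probability density `p`, a
measurable `π : ℝ^d → [0,1]`, and `α ∈ (0,1]`, with `Z = ∫ π^α p`, `P_F = ∫_F p`,
and `r = ∫ |π − 𝟙_F| p`, one has `|Z − P_F| ≤ r^α`. -/
theorem stmt_9
    {d : ℕ} (F : Set (Fin d → ℝ)) (hF : MeasurableSet F)
    (p : (Fin d → ℝ) → ℝ)
    (hp_meas : Measurable p) (hp_nonneg : ∀ x, 0 ≤ p x) (hp_int : ∫ x, p x = 1)
    (π : (Fin d → ℝ) → ℝ) (hπ_meas : Measurable π)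
    (hπ01 : ∀ x, π x ∈ Set.Icc (0 : ℝ) 1)
    (α : ℝ) (hα : 0 < α) (hα1 : α ≤ 1)
    (Z PF r : ℝ)
    (hZ : Z = ∫ x, π x ^ α * p x)
    (hPF : PF = ∫ x in F, p x)
    (hr : r = ∫ x, |π x - F.indicator (fun _ => (1 : ℝ)) x| * p x) :
    |Z - PF| ≤ r ^ α :=
  stmt_9_general F hF p hp_nonneg hp_int π hπ_meas hπ01 α hα hα1 Z PF r hZ hPF hr
end

section
/- Let F ⊆ ℝ^d be measurable, p a probability density on ℝ^d, π : ℝ^d → [0,1] measurable, α ∈ (0,1], and set Z = ∫ π(x)^α p(x) dx and P_F = ∫_F p(x) dx, assuming Z > 0 and P_F > 0. Define q†(x) = π(x)^α p(x)/Z and q⋆(x) = 𝟙_F(x) p(x)/P_F, and let r = ∫ |π(x) − 𝟙_F(x)| p(x) dx. Then the total variation distance satisfies (1/2) ∫ |q†(x) − q⋆(x)| dx ≤ (1/Z) · r^α. -/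
open MeasureTheory
open scoped ENNReal

lemma my_jensen {d : ℕ} (p g : (Fin d → ℝ) → ℝ)
    (hp_meas : Measurable p) (hp_nonneg : ∀ x, 0 ≤ p x)
    (hp_int : Integrable p) (hp1 : ∫ x, p x = 1)
    (hg_meas : Measurable g) (hg0 : ∀ x, 0 ≤ g x) (hg1 : ∀ x, g x ≤ 1)
    {α : ℝ} (hα : 0 < α) (hα1 : α < 1) :
    ∫ x, g x ^ α * p x ≤ (∫ x, g x * p x) ^ α := by
  set r : ℝ := ∫ x, g x * p x with hrdef
  have hr0 : 0 ≤ r := integral_nonneg fun x => mul_nonneg (hg0 x) (hp_nonneg x)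
  have hgα0 : ∀ x, 0 ≤ g x ^ α := fun x => Real.rpow_nonneg (hg0 x) α
  have hgα1 : ∀ x, g x ^ α ≤ 1 := fun x => Real.rpow_le_one (hg0 x) (hg1 x) hα.le
  have hgαm : Measurable (fun x => g x ^ α) := hg_meas.pow measurable_const
  have int_gp : Integrable (fun x => g x * p x) := by
    refine hp_int.mono ((hg_meas.mul hp_meas).aestronglyMeasurable) (ae_of_all _ fun x => ?_)
    simp only [Real.norm_eq_abs, abs_of_nonneg (hp_nonneg x),
      abs_of_nonneg (mul_nonneg (hg0 x) (hp_nonneg x))]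
    exact mul_le_of_le_one_left (hp_nonneg x) (hg1 x)
  have int_gαp : Integrable (fun x => g x ^ α * p x) := by
    refine hp_int.mono ((hgαm.mul hp_meas).aestronglyMeasurable)
      (ae_of_all _ fun x => ?_)
    simp only [Real.norm_eq_abs, abs_of_nonneg (hp_nonneg x),
      abs_of_nonneg (mul_nonneg (hgα0 x) (hp_nonneg x))]
    exact mul_le_of_le_one_left (hp_nonneg x) (hgα1 x)
  have hconj : (1/α).HolderConjugate (1/(1-α)) := by
    refine Real.holderConjugate_iff.mpr ⟨?_, ?_⟩
    · rw [lt_div_iff₀ hα]; linarith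
    · rw [one_div, one_div, inv_inv, inv_inv]; ring
  set f : (Fin d → ℝ) → ℝ≥0∞ := fun x => ENNReal.ofReal (g x * p x) ^ α with hf
  set h : (Fin d → ℝ) → ℝ≥0∞ := fun x => ENNReal.ofReal (p x) ^ (1-α) with hh
  have hf_meas : AEMeasurable f :=
    (((hg_meas.mul hp_meas).ennreal_ofReal).pow measurable_const).aemeasurable
  have hh_meas : AEMeasurable h := ((hp_meas.ennreal_ofReal).pow measurable_const).aemeasurable
  have key := ENNReal.lintegral_mul_le_Lp_mul_Lq volume hconj hf_meas hh_meas
  have hfh : ∀ x, (f * h) x = ENNReal.ofReal (g x ^ α * p x) := by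
    intro x
    simp only [Pi.mul_apply, hf, hh]
    rcases eq_or_lt_of_le (hp_nonneg x) with hp0 | hp0
    · rw [← hp0]
      simp [ENNReal.zero_rpow_of_pos hα, ENNReal.zero_rpow_of_pos (by linarith : (0:ℝ) < 1-α)]
    · rw [ENNReal.ofReal_rpow_of_nonneg (mul_nonneg (hg0 x) (hp_nonneg x)) hα.le,
        ENNReal.ofReal_rpow_of_nonneg (hp_nonneg x) (by linarith : (0:ℝ) ≤ 1-α),
        ← ENNReal.ofReal_mul (Real.rpow_nonneg (mul_nonneg (hg0 x) (hp_nonneg x)) α)]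
      congr 1
      rw [Real.mul_rpow (hg0 x) hp0.le, mul_assoc, ← Real.rpow_add hp0]
      norm_num
  have hfp : ∀ x, f x ^ (1/α) = ENNReal.ofReal (g x * p x) := by
    intro x
    rw [hf, ← ENNReal.rpow_mul, mul_one_div_cancel hα.ne', ENNReal.rpow_one]
  have hhq : ∀ x, h x ^ (1/(1-α)) = ENNReal.ofReal (p x) := by
    intro x
    rw [hh, ← ENNReal.rpow_mul, mul_one_div_cancel (by linarith : (1:ℝ)-α ≠ 0), ENNReal.rpow_one]
  rw [lintegral_congr hfh] at key
  simp only [hfp, hhq, one_div_one_div] at key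
  rw [← ofReal_integral_eq_lintegral_ofReal int_gαp
      (ae_of_all _ fun x => mul_nonneg (hgα0 x) (hp_nonneg x)),
    ← ofReal_integral_eq_lintegral_ofReal int_gp
      (ae_of_all _ fun x => mul_nonneg (hg0 x) (hp_nonneg x)),
    ← ofReal_integral_eq_lintegral_ofReal hp_int (ae_of_all _ hp_nonneg), hp1] at key
  rw [ENNReal.ofReal_one, ENNReal.one_rpow, mul_one, ← hrdef,
    ENNReal.ofReal_rpow_of_nonneg hr0 hα.le] at key
  exact (ENNReal.ofReal_le_ofReal_iff (Real.rpow_nonneg hr0 α)).mp key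
lemma my_t_le_rpow {t : ℝ} (ht0 : 0 ≤ t) (ht1 : t ≤ 1) {α : ℝ} (hα : 0 < α) (hα1 : α ≤ 1) :
    t ≤ t ^ α := by
  rcases eq_or_lt_of_le ht0 with h0 | h0
  · rw [← h0, Real.zero_rpow hα.ne']
  · calc t = t ^ (1:ℝ) := (Real.rpow_one t).symm
    _ ≤ t ^ α := Real.rpow_le_rpow_of_exponent_ge h0 ht1 hα1

/-- For a measurable `F ⊆ ℝ^d`, probability density `p`, measurable
`π : ℝ^d → [0,1]`, `α ∈ (0,1]`, `Z = ∫ π^α p > 0`, `P_F = ∫_F p > 0`, the normalized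
densities `q†(x) = π(x)^α p(x)/Z` and `q⋆(x) = 𝟙_F(x) p(x)/P_F` satisfy
`(1/2) ∫ |q† − q⋆| ≤ (1/Z) r^α` where `r = ∫ |π − 𝟙_F| p`. -/
theorem stmt_11
    {d : ℕ} (F : Set (Fin d → ℝ)) (hF : MeasurableSet F)
    (p : (Fin d → ℝ) → ℝ)
    (hp_meas : Measurable p) (hp_nonneg : ∀ x, 0 ≤ p x) (hp_int : ∫ x, p x = 1)
    (π : (Fin d → ℝ) → ℝ) (hπ_meas : Measurable π)
    (hπ01 : ∀ x, π x ∈ Set.Icc (0 : ℝ) 1)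
    (α : ℝ) (hα : 0 < α) (hα1 : α ≤ 1)
    (Z PF : ℝ)
    (hZ : Z = ∫ x, π x ^ α * p x) (hPF : PF = ∫ x in F, p x)
    (hZ_pos : 0 < Z) (hPF_pos : 0 < PF)
    (qdag qstar : (Fin d → ℝ) → ℝ)
    (hqdag : ∀ x, qdag x = π x ^ α * p x / Z)
    (hqstar : ∀ x, qstar x = F.indicator (fun _ => (1 : ℝ)) x * p x / PF)
    (r : ℝ) (hr : r = ∫ x, |π x - F.indicator (fun _ => (1 : ℝ)) x| * p x) :
    (1 / 2) * ∫ x, |qdag x - qstar x| ≤ (1 / Z) * r ^ α := by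
  set ind : (Fin d → ℝ) → ℝ := F.indicator (fun _ => (1 : ℝ)) with hind
  have hind_meas : Measurable ind := measurable_const.indicator hF
  have hind0 : ∀ x, 0 ≤ ind x := fun x => Set.indicator_nonneg (fun _ _ => zero_le_one) x
  have hind1 : ∀ x, ind x ≤ 1 := fun x => Set.indicator_le_self' (fun _ _ => zero_le_one) x
  have hπ0 : ∀ x, 0 ≤ π x := fun x => (hπ01 x).1
  have hπ1 : ∀ x, π x ≤ 1 := fun x => (hπ01 x).2
  have hπα0 : ∀ x, 0 ≤ π x ^ α := fun x => Real.rpow_nonneg (hπ0 x) α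
  have hπα1 : ∀ x, π x ^ α ≤ 1 := fun x => Real.rpow_le_one (hπ0 x) (hπ1 x) hα.le
  have hπαm : Measurable (fun x => π x ^ α) := hπ_meas.pow measurable_const
  -- p is integrable
  have hp_intg : Integrable p := by
    by_contra hc
    rw [integral_undef hc] at hp_int
    exact one_ne_zero hp_int.symm
  have int_of_le : ∀ f : (Fin d → ℝ) → ℝ, Measurable f → (∀ x, |f x| ≤ p x) → Integrable f := by
    intro f hm hb
    refine hp_intg.mono hm.aestronglyMeasurable (ae_of_all _ fun x => ?_)
    simpa [Real.norm_eq_abs, abs_of_nonneg (hp_nonneg x)] using hb x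
  set u : (Fin d → ℝ) → ℝ := fun x => π x ^ α * p x with hu
  set v : (Fin d → ℝ) → ℝ := fun x => ind x * p x with hv
  have hu0 : ∀ x, 0 ≤ u x := fun x => mul_nonneg (hπα0 x) (hp_nonneg x)
  have hv0 : ∀ x, 0 ≤ v x := fun x => mul_nonneg (hind0 x) (hp_nonneg x)
  have int_u : Integrable u := int_of_le u (hπαm.mul hp_meas) fun x => by
    rw [abs_of_nonneg (hu0 x)]; exact mul_le_of_le_one_left (hp_nonneg x) (hπα1 x)
  have int_v : Integrable v := int_of_le v (hind_meas.mul hp_meas) fun x => by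
    rw [abs_of_nonneg (hv0 x)]; exact mul_le_of_le_one_left (hp_nonneg x) (hind1 x)
  have int_uv : Integrable (fun x => |u x - v x|) := (int_u.sub int_v).abs
  have hintv : ∫ x, v x = PF := by
    rw [hPF, ← integral_indicator hF]
    congr 1
    funext x
    by_cases hx : x ∈ F
    · simp [hv, hind, Set.indicator_of_mem hx]
    · simp [hv, hind, Set.indicator_of_notMem hx]
  have hintu : ∫ x, u x = Z := hZ.symm
  set S : ℝ := ∫ x, |u x - v x| with hS
  have hS0 : 0 ≤ S := integral_nonneg fun x => abs_nonneg _
  -- |PF - Z| ≤ S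
  have hPFZ : |PF - Z| ≤ S := by
    rw [← hintv, ← hintu, ← integral_sub int_v int_u]
    calc |∫ x, (v x - u x)| = ‖∫ x, (v x - u x)‖ := (Real.norm_eq_abs _).symm
    _ ≤ ∫ x, ‖v x - u x‖ := norm_integral_le_integral_norm _
    _ = S := by
        simp only [Real.norm_eq_abs]
        rw [hS]; congr 1; funext x; rw [abs_sub_comm]
  -- pointwise bound on |qdag - qstar|
  set c : ℝ := |PF - Z| / (Z * PF) with hc
  have hc0 : 0 ≤ c := div_nonneg (abs_nonneg _) (mul_nonneg hZ_pos.le hPF_pos.le)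
  have hpw : ∀ x, |qdag x - qstar x| ≤ |u x - v x| / Z + v x * c := by
    intro x
    have hdecomp : qdag x - qstar x = (u x - v x) / Z + v x * ((PF - Z) / (Z * PF)) := by
      rw [hqdag, hqstar]
      field_simp
      ring
    calc |qdag x - qstar x| ≤ |(u x - v x) / Z| + |v x * ((PF - Z) / (Z * PF))| := by
          rw [hdecomp]; exact abs_add_le _ _
    _ = |u x - v x| / Z + v x * c := by
          rw [abs_div, abs_of_pos hZ_pos, abs_mul, abs_of_nonneg (hv0 x), hc, abs_div,
            abs_of_pos (mul_pos hZ_pos hPF_pos)]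
  -- integrate
  have int_q : Integrable (fun x => |qdag x - qstar x|) := by
    have h1 : Integrable qdag := (int_u.div_const Z).congr (ae_of_all _ fun x => (hqdag x).symm)
    have h2 : Integrable qstar := (int_v.div_const PF).congr (ae_of_all _ fun x => (hqstar x).symm)
    exact (h1.sub h2).abs
  have int_rhs : Integrable (fun x => |u x - v x| / Z + v x * c) :=
    (int_uv.div_const Z).add (int_v.mul_const c)
  have hmain : ∫ x, |qdag x - qstar x| ≤ S / Z + |PF - Z| / Z := by
    calc ∫ x, |qdag x - qstar x| ≤ ∫ x, (|u x - v x| / Z + v x * c) :=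
          integral_mono int_q int_rhs hpw
    _ = S / Z + PF * c := by
          rw [integral_add (int_uv.div_const Z) (int_v.mul_const c), integral_div,
            integral_mul_const, hintv, ← hS]
    _ = S / Z + |PF - Z| / Z := by
          rw [hc]
          field_simp
  have hmain2 : ∫ x, |qdag x - qstar x| ≤ 2 * (S / Z) := by
    have h4 : |PF - Z| / Z ≤ S / Z := (div_le_div_iff_of_pos_right hZ_pos).mpr hPFZ
    linarith
  -- Now bound S by r ^ α
  set g : (Fin d → ℝ) → ℝ := fun x => |π x - ind x| with hg
  have hg_meas : Measurable g := (hπ_meas.sub hind_meas).abs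
  have hg0 : ∀ x, 0 ≤ g x := fun x => abs_nonneg _
  have hg1 : ∀ x, g x ≤ 1 := by
    intro x
    rw [hg, abs_sub_le_iff]
    constructor <;> nlinarith [hπ0 x, hπ1 x, hind0 x, hind1 x]
  have hr_eq : r = ∫ x, g x * p x := hr
  have hr0 : 0 ≤ r := by
    rw [hr_eq]; exact integral_nonneg fun x => mul_nonneg (hg0 x) (hp_nonneg x)
  -- pointwise : |u - v| ≤ g^α * p
  have hpw2 : ∀ x, |u x - v x| ≤ g x ^ α * p x := by
    intro x
    have h1 : |u x - v x| = |π x ^ α - ind x| * p x := by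
      rw [hu, hv, ← sub_mul, abs_mul, abs_of_nonneg (hp_nonneg x)]
    rw [h1]
    refine mul_le_mul_of_nonneg_right ?_ (hp_nonneg x)
    by_cases hx : x ∈ F
    · have hix : ind x = 1 := by simp [hind, Set.indicator_of_mem hx]
      rw [hix]
      have hgx : g x = 1 - π x := by
        show |π x - ind x| = 1 - π x
        rw [hix, abs_sub_comm, abs_of_nonneg (by linarith [hπ1 x])]
      rw [hgx, abs_sub_comm, abs_of_nonneg (by linarith [hπα1 x])]
      have h2 : π x ≤ π x ^ α := my_t_le_rpow (hπ0 x) (hπ1 x) hα hα1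
      have h3 : 1 - π x ≤ (1 - π x) ^ α :=
        my_t_le_rpow (by linarith [hπ1 x]) (by linarith [hπ0 x]) hα hα1
      linarith
    · have hix : ind x = 0 := by simp [hind, Set.indicator_of_notMem hx]
      rw [hix]
      have hgx : g x = π x := by
        show |π x - ind x| = π x
        rw [hix, sub_zero, abs_of_nonneg (hπ0 x)]
      rw [hgx, sub_zero, abs_of_nonneg (hπα0 x)]
  have int_gαp : Integrable (fun x => g x ^ α * p x) := by
    refine int_of_le _ ((hg_meas.pow measurable_const).mul hp_meas) fun x => ?_
    rw [abs_of_nonneg (mul_nonneg (Real.rpow_nonneg (hg0 x) α) (hp_nonneg x))]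
    exact mul_le_of_le_one_left (hp_nonneg x) (Real.rpow_le_one (hg0 x) (hg1 x) hα.le)
  have hS_le : S ≤ r ^ α := by
    have h1 : S ≤ ∫ x, g x ^ α * p x := integral_mono int_uv int_gαp hpw2
    rcases eq_or_lt_of_le hα1 with h | h
    · subst h
      simp only [Real.rpow_one] at h1 ⊢
      rw [hr_eq]
      exact h1
    · have h2 := my_jensen p g hp_meas hp_nonneg hp_intg hp_int hg_meas hg0 hg1 hα h
      rw [← hr_eq] at h2
      exact h1.trans h2
  have final2 : S / Z ≤ r ^ α / Z := (div_le_div_iff_of_pos_right hZ_pos).mpr hS_le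
  have e2 : (1 / Z) * r ^ α = r ^ α / Z := by ring
  linarith [hmain2, final2, e2]
end
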